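/- Linear Speed-Up: let α, β be types with fixed finite-alphabet encodings and let f : α → β be computable by a Turing machine (Mathlib's Turing.FinTM2 model) within time bound T : ℕ → ℕ in the input length, i.e. Turing.TM2ComputableInTime holds with time bound T. Then for every constant C ≥ 1 there is a Turing machine in the same model computing f within time bound n ↦ n + T n / C (natural-number division rounded up). -/

import Mathlib

namespace LinearSpeedup

open Turing Turing.TM2

variable {K : Type} [DecidableEq K] {Γ : K → Type} {Λ σ : Type}

/-- Dispatch on the current internal state (over a list of candidate states),
continuing with the statement of the label chosen by `f`. -/
noncomputable def dispatch (M : Λ → Stmt Γ Λ σ) (f : σ → Λ) : List σ → Stmt Γ Λ σ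
  | [] => Stmt.halt
  | s :: l => Stmt.branch (fun v => @decide (v = s) (Classical.dec _)) (M (f s)) (dispatch M f l)

/-- Inline one extra step of the machine `M` into a statement: every `goto f`
is replaced by executing the next statement immediately. -/
noncomputable def inline (M : Λ → Stmt Γ Λ σ) [Fintype σ] : Stmt Γ Λ σ → Stmt Γ Λ σ
  | .push k f q => .push k f (inline M q)
  | .peek k f q => .peek k f (inline M q)
  | .pop k f q => .pop k f (inline M q)
  | .load a q => .load a (inline M q)
  | .branch p q₁ q₂ => .branch p (inline M q₁) (inline M q₂)
  | .goto f => dispatch M f (Finset.univ : Finset σ).toList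
  | .halt => .halt

/-- The total step function: do a step, and stay put if halted. -/
def g (M : Λ → Stmt Γ Λ σ) (c : Cfg Γ Λ σ) : Cfg Γ Λ σ := (step M c).getD c

theorem dispatch_spec (M : Λ → Stmt Γ Λ σ) (f : σ → Λ) (l : List σ) (v : σ) (hv : v ∈ l)
    (S : ∀ k, List (Γ k)) :
    stepAux (dispatch M f l) v S = stepAux (M (f v)) v S := by
  induction l with
  | nil => cases hv
  | cons s l ih =>
    rw [dispatch, stepAux]
    by_cases hvs : v = s
    · subst hvs
      simp
    · have : @decide (v = s) (Classical.dec _) = false := by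
        simp [hvs]
      rw [this]
      simp only [cond_false]
      rcases List.mem_cons.1 hv with h | h
      · exact absurd h hvs
      · exact ih h

theorem g_halt (M : Λ → Stmt Γ Λ σ) (c : Cfg Γ Λ σ) (hc : c.l = none) : g M c = c := by
  obtain ⟨l, v, S⟩ := c
  cases hc
  rfl

theorem inline_spec (M : Λ → Stmt Γ Λ σ) [Fintype σ] (q : Stmt Γ Λ σ) (v : σ)
    (S : ∀ k, List (Γ k)) :
    stepAux (inline M q) v S = g M (stepAux q v S) := by
  induction q generalizing v S with
  | push k f q ih => rw [inline, stepAux, stepAux, ih]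
  | peek k f q ih => rw [inline, stepAux, stepAux, ih]
  | pop k f q ih => rw [inline, stepAux, stepAux, ih]
  | load a q ih => rw [inline, stepAux, stepAux, ih]
  | branch p q₁ q₂ ih₁ ih₂ =>
    rw [inline, stepAux, stepAux]
    cases p v
    · exact ih₂ v S
    · exact ih₁ v S
  | goto f =>
    rw [inline, dispatch_spec M f _ v (by simp)]
    rfl
  | halt => rfl

theorem inline_iter (M : Λ → Stmt Γ Λ σ) [Fintype σ] (j : ℕ) (q : Stmt Γ Λ σ) (v : σ)
    (S : ∀ k, List (Γ k)) :
    stepAux ((inline M)^[j] q) v S = (g M)^[j] (stepAux q v S) := by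
  induction j generalizing q v S with
  | zero => rfl
  | succ j ih =>
    rw [Function.iterate_succ_apply, ih, inline_spec, ← Function.iterate_succ_apply]

theorem step_fast (M : Λ → Stmt Γ Λ σ) [Fintype σ] (C : ℕ) (hC : 1 ≤ C) (c : Cfg Γ Λ σ)
    (l : Λ) (hl : c.l = some l) :
    step (fun l => (inline M)^[C - 1] (M l)) c = some ((g M)^[C] c) := by
  obtain ⟨cl, v, S⟩ := c
  cases hl
  show some (stepAux ((inline M)^[C - 1] (M l)) v S) = _
  rw [inline_iter]
  have : stepAux (M l) v S = g M ⟨some l, v, S⟩ := rfl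
  rw [this, ← Function.iterate_succ_apply]
  have hCC : (C - 1).succ = C := by omega
  rw [hCC]

theorem old_run (M : Λ → Stmt Γ Λ σ) : ∀ (m : ℕ) (a b : Cfg Γ Λ σ),
    (flip bind (step M))^[m] (some a) = some b → (g M)^[m] a = b := by
  intro m
  induction m with
  | zero => intro a b hab; exact Option.some_injective _ hab
  | succ m ih =>
    intro a b hab
    rw [Function.iterate_succ_apply] at hab
    have hfa : flip bind (step M) (some a) = step M a := rfl
    rw [hfa] at hab
    cases hsa : step M a with
    | none =>
      rw [hsa] at hab
      have : ∀ n, (flip bind (step M))^[n] (none : Option (Cfg Γ Λ σ)) = none := fun n =>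
        Function.iterate_fixed rfl n
      rw [this] at hab
      exact absurd hab (by simp)
    | some a' =>
      rw [hsa] at hab
      have hga : g M a = a' := by rw [g, hsa]; rfl
      rw [Function.iterate_succ_apply, hga]
      exact ih a' b hab

theorem fast_run (M : Λ → Stmt Γ Λ σ) [Fintype σ] (C : ℕ) (hC : 1 ≤ C) (hcfg : Cfg Γ Λ σ)
    (hhalt : hcfg.l = none) : ∀ (k : ℕ) (c : Cfg Γ Λ σ), (g M)^[k] c = hcfg →
    ∃ j ≤ (k + C - 1) / C,
      (flip bind (step (fun l => (inline M)^[C - 1] (M l))))^[j] (some c) = some hcfg := by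
  intro k
  induction k using Nat.strong_induction_on with
  | _ k IH =>
    intro c hk
    cases hcl : c.l with
    | none =>
      have hfix : (g M)^[k] c = c := Function.iterate_fixed (g_halt M c hcl) k
      rw [hk] at hfix
      exact ⟨0, Nat.zero_le _, by rw [Function.iterate_zero_apply, hfix]⟩
    | some l =>
      have hk1 : 1 ≤ k := by
        rcases Nat.eq_zero_or_pos k with h0 | h0
        · subst h0; rw [Function.iterate_zero_apply] at hk; rw [hk] at hcl
          rw [hhalt] at hcl; cases hcl
        · exact h0
      have hstep : flip bind (step (fun l => (inline M)^[C - 1] (M l))) (some c)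
          = some ((g M)^[C] c) := step_fast M C hC c l hcl
      by_cases hkC : k ≤ C
      · refine ⟨1, ?_, ?_⟩
        · rw [Nat.one_le_div_iff (by omega)]; omega
        · rw [Function.iterate_one, hstep]
          have : (g M)^[C] c = (g M)^[C - k] ((g M)^[k] c) := by
            rw [← Function.iterate_add_apply]
            congr 1
            omega
          rw [this, hk, Function.iterate_fixed (g_halt M hcfg hhalt)]
      · have hsub : (g M)^[k - C] ((g M)^[C] c) = hcfg := by
          rw [← Function.iterate_add_apply]
          have : k - C + C = k := by omega
          rw [this, hk]
        obtain ⟨j', hj', hrun⟩ := IH (k - C) (by omega) ((g M)^[C] c) hsub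
        refine ⟨j' + 1, ?_, ?_⟩
        · have h1 : k - C + C - 1 = k - 1 := by omega
          have h2 : k + C - 1 = (k - 1) + C := by omega
          rw [h1] at hj'
          rw [h2, Nat.add_div_right _ (by omega)]
          omega
        · rw [Function.iterate_succ_apply, hstep]
          exact hrun

end LinearSpeedup

/-- The December-2024 `Computability.FinEncoding`: an encoding with a bundled finite alphabet. -/
structure OldFinEncoding (α : Type) where
  Γ : Type
  enc : Computability.Encoding α Γ
  ΓFin : Fintype Γ

/-- Linear Speed-Up: if `f` is computable by a two-stack Turing machine within
time bound `T`, then for every constant `C ≥ 1` it is computable by such a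
machine within time bound `n ↦ n + ⌈T n / C⌉`. -/
theorem linear_speedup {α β : Type} (ea : OldFinEncoding α)
    (eb : OldFinEncoding β) (f : α → β) (T : ℕ → ℕ)
    (h : Turing.TM2ComputableInTime ea.enc.encode eb.enc.encode f) (hT : h.time = T)
    (C : ℕ) (hC : 1 ≤ C) :
    ∃ h' : Turing.TM2ComputableInTime ea.enc.encode eb.enc.encode f,
      h'.time = fun n => n + (T n + C - 1) / C := by
  classical
  letI : Fintype h.tm.σ := h.tm.σFin
  letI : DecidableEq h.tm.K := h.tm.kDecidableEq
  let tm' : Turing.FinTM2 :=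
    { h.tm with m := fun l => (LinearSpeedup.inline h.tm.m)^[C - 1] (h.tm.m l) }
  refine ⟨{ tm := tm',
            inputAlphabet := h.inputAlphabet,
            outputAlphabet := h.outputAlphabet,
            time := fun n => n + (T n + C - 1) / C,
            outputsFun := fun a => ?_ }, rfl⟩
  have H := h.outputsFun a
  have hold : (LinearSpeedup.g h.tm.m)^[H.steps]
      (Turing.initList h.tm (List.map h.inputAlphabet.invFun (ea.enc.encode a))) =
      Turing.haltList h.tm (List.map h.outputAlphabet.invFun (eb.enc.encode (f a))) :=
    LinearSpeedup.old_run _ _ _ _ H.evals_in_steps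
  have hex := LinearSpeedup.fast_run h.tm.m C hC _ rfl H.steps _ hold
  obtain hj := hex.choose_spec.1
  refine ⟨⟨hex.choose, hex.choose_spec.2⟩, ?_⟩
  have hm : H.steps ≤ T (ea.enc.encode a).length :=
    le_of_le_of_eq H.steps_le_m (congrFun hT _)
  calc hex.choose ≤ (H.steps + C - 1) / C := hj
    _ ≤ (T (ea.enc.encode a).length + C - 1) / C := Nat.div_le_div_right (by omega)
    _ ≤ (ea.enc.encode a).length + (T (ea.enc.encode a).length + C - 1) / C := Nat.le_add_left _ _
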